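/- arXiv:1411.0903 — 5 statements merged into one kernel-verified Lean document; each statement's English description precedes it below -/
import Mathlib

section
/- For real z ≠ 0, ∫_0^∞ cos(zv)/cosh²(πv) dv = z/(2π sinh(z/2)). -/
/-!
Integrating by parts against `(tanh (π v) - 1) / π`, whose derivative is `1 / cosh (π v) ^ 2`,
reduces the integral to `1 / π + z / π * ∫₀^∞ sin (z v) (tanh (π v) - 1) dv`. Expanding
`tanh y - 1 = -2 ∑ (-1)ⁿ exp (-2 (n + 1) y)`, whose partial sums are dominated by `4 exp (-2 y)`,
and integrating termwise gives the alternating series `-2 ∑ (-1)ⁿ z / (z² + (2π (n + 1))²)`.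
It is summed with the Mittag-Leffler expansion of the cotangent at the imaginary point `a i`,
`π coth (π a) = 1 / a + ∑ 2a / (a² + n²)`, and `coth x - coth (x / 2) = -1 / sinh x`.
-/

open MeasureTheory Real Set Filter Topology

namespace Real

theorem hasDerivAt_tanh (x : ℝ) : HasDerivAt tanh (1 / cosh x ^ 2) x := by
  have h := (hasDerivAt_sinh x).div (hasDerivAt_cosh x) (cosh_pos x).ne'
  rw [show sinh / cosh = tanh from funext fun y ↦ (tanh_eq_sinh_div_cosh y).symm,
    ← sq, ← sq, cosh_sq_sub_sinh_sq] at h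
  exact h

@[fun_prop]
theorem continuous_tanh : Continuous tanh :=
  continuous_iff_continuousAt.2 fun x ↦ (hasDerivAt_tanh x).continuousAt

theorem one_sub_tanh_eq (x : ℝ) : 1 - tanh x = 2 * exp (-2 * x) / (1 + exp (-2 * x)) := by
  have h : exp x * exp (-x) = 1 := by rw [← exp_add, add_neg_cancel, exp_zero]
  rw [tanh_eq_sinh_div_cosh, sinh_eq, cosh_eq, show -2 * x = -x + -x by ring, exp_add]
  field_simp
  linear_combination (-2 * exp (-x)) * h

theorem one_sub_tanh_le (x : ℝ) : 1 - tanh x ≤ 2 * exp (-2 * x) := by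
  rw [one_sub_tanh_eq]
  exact div_le_self (by positivity) (by linarith [exp_pos (-2 * x)])

theorem one_div_cosh_sq_le (x : ℝ) : 1 / cosh x ^ 2 ≤ 4 * exp (-2 * x) := by
  have h : 1 / cosh x ^ 2 = (1 - tanh x) * (1 + tanh x) := by
    rw [tanh_eq_sinh_div_cosh]
    field_simp
    linear_combination -(cosh_sq_sub_sinh_sq x)
  rw [h]
  nlinarith [one_sub_tanh_le x, tanh_lt_one x, neg_one_lt_tanh x, exp_pos (-2 * x)]

end Real

theorem integrableOn_Ioi_of_abs_le_mul_exp {f : ℝ → ℝ} (hf : Continuous f) {C c : ℝ} (hc : 0 < c)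
    (hbound : ∀ v, |f v| ≤ C * exp (-c * v)) : IntegrableOn f (Ioi 0) :=
  ((exp_neg_integrableOn_Ioi 0 hc).const_mul C).mono' hf.aestronglyMeasurable
    (Eventually.of_forall hbound)

theorem abs_cos_mul_div_cosh_sq_le (z b v : ℝ) :
    |cos (z * v) / cosh (b * v) ^ 2| ≤ 4 * exp (-(2 * b) * v) := by
  rw [abs_div, abs_of_pos (pow_pos (cosh_pos _) 2), show -(2 * b) * v = -2 * (b * v) by ring]
  calc |cos (z * v)| / cosh (b * v) ^ 2 ≤ 1 / cosh (b * v) ^ 2 := by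
        gcongr; exact abs_cos_le_one _
    _ ≤ _ := one_div_cosh_sq_le _

theorem abs_mul_tanh_sub_one_le {t : ℝ} (ht : |t| ≤ 1) (b v : ℝ) :
    |t * (tanh (b * v) - 1)| ≤ 2 * exp (-(2 * b) * v) := by
  rw [abs_mul, abs_sub_comm, abs_of_pos (sub_pos.2 (tanh_lt_one _)),
    show -(2 * b) * v = -2 * (b * v) by ring]
  calc |t| * (1 - tanh (b * v)) ≤ 1 * (2 * exp (-2 * (b * v))) :=
        mul_le_mul ht (one_sub_tanh_le _) (sub_pos.2 (tanh_lt_one _)).le zero_le_one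
    _ = _ := one_mul _

theorem integrableOn_sin_mul_tanh_sub_one {b : ℝ} (hb : 0 < b) (z : ℝ) :
    IntegrableOn (fun v ↦ sin (z * v) * (tanh (b * v) - 1)) (Ioi 0) :=
  integrableOn_Ioi_of_abs_le_mul_exp (by fun_prop) (by positivity)
    fun v ↦ abs_mul_tanh_sub_one_le (abs_sin_le_one _) b v

theorem integral_cos_mul_div_cosh_sq_eq_integral_sin_mul_tanh {b : ℝ} (hb : 0 < b) (z : ℝ) :
    ∫ v in Ioi 0, cos (z * v) / cosh (b * v) ^ 2
      = 1 / b + z / b * ∫ v in Ioi 0, sin (z * v) * (tanh (b * v) - 1) := by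
  have h2b : 0 < 2 * b := by positivity
  have hu (x : ℝ) : HasDerivAt (fun v ↦ cos (z * v)) (-sin (z * x) * z) x := by
    simpa using ((hasDerivAt_id x).const_mul z).cos
  have hv (x : ℝ) : HasDerivAt (fun v ↦ (tanh (b * v) - 1) / b) (1 / cosh (b * x) ^ 2) x := by
    have h := ((hasDerivAt_tanh (b * x)).comp x ((hasDerivAt_id x).const_mul b)).sub_const 1
    refine (h.div_const b).congr_deriv ?_
    field_simp
  have huv' : IntegrableOn (fun v ↦ cos (z * v) * (1 / cosh (b * v) ^ 2)) (Ioi 0) := by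
    refine integrableOn_Ioi_of_abs_le_mul_exp (by fun_prop (disch := intro; positivity)) h2b
      (C := 4) fun v ↦ ?_
    simpa only [mul_one_div] using abs_cos_mul_div_cosh_sq_le z b v
  have hu'v : IntegrableOn (fun v ↦ -sin (z * v) * z * ((tanh (b * v) - 1) / b)) (Ioi 0) :=
    IntegrableOn.congr_fun ((integrableOn_sin_mul_tanh_sub_one hb z).const_mul (-(z / b)))
      (fun v _ ↦ by ring) measurableSet_Ioi
  have h_zero : Tendsto (fun v ↦ cos (z * v) * ((tanh (b * v) - 1) / b)) (𝓝[>] 0) (𝓝 (-1 / b)) := by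
    have hcont : Continuous fun v ↦ cos (z * v) * ((tanh (b * v) - 1) / b) := by fun_prop
    simpa [neg_div] using (hcont.tendsto 0).mono_left nhdsWithin_le_nhds
  have h_infty : Tendsto (fun v ↦ cos (z * v) * ((tanh (b * v) - 1) / b)) atTop (𝓝 0) := by
    have hexp : Tendsto (fun v ↦ 2 * exp (-(2 * b) * v) / b) atTop (𝓝 0) := by
      have h := tendsto_exp_neg_atTop_nhds_zero.comp (tendsto_id.const_mul_atTop h2b)
      simpa [neg_mul] using (h.const_mul 2).div_const b
    refine squeeze_zero_norm (fun v ↦ ?_) hexp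
    rw [norm_eq_abs, mul_div_assoc', abs_div, abs_of_pos hb]
    gcongr
    exact abs_mul_tanh_sub_one_le (abs_cos_le_one _) b v
  have hparts := integral_Ioi_mul_deriv_eq_deriv_mul (fun x _ ↦ hu x) (fun x _ ↦ hv x) huv' hu'v
    h_zero h_infty
  simp only [mul_one_div] at hparts
  have hint : ∫ x in Ioi 0, -sin (z * x) * z * ((tanh (b * x) - 1) / b)
      = -(z / b) * ∫ x in Ioi 0, sin (z * x) * (tanh (b * x) - 1) := by
    rw [← integral_const_mul]
    congr 1 with x
    ring
  rw [hparts, hint]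
  ring

lemma sin_mul_exp_neg_mul_eq_im (z c v : ℝ) :
    sin (z * v) * exp (-c * v) = (Complex.exp ((-c + z * Complex.I) * v)).im := by
  simp [Complex.exp_im, mul_comm]

theorem integrableOn_sin_mul_exp_neg_mul (z : ℝ) {c : ℝ} (hc : 0 < c) :
    IntegrableOn (fun v ↦ sin (z * v) * exp (-c * v)) (Ioi 0) := by
  simp_rw [sin_mul_exp_neg_mul_eq_im]
  exact (integrableOn_exp_mul_complex_Ioi (by simpa using hc) 0).im

theorem integral_sin_mul_exp_neg_mul (z : ℝ) {c : ℝ} (hc : 0 < c) :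
    ∫ v in Ioi 0, sin (z * v) * exp (-c * v) = z / (z ^ 2 + c ^ 2) := by
  have hre : (-c + z * Complex.I).re < 0 := by simpa using hc
  simp_rw [sin_mul_exp_neg_mul_eq_im]
  have h := integral_im (integrableOn_exp_mul_complex_Ioi hre 0)
  simp only [RCLike.im_to_complex] at h
  rw [h, integral_exp_mul_complex_Ioi hre]
  simp [Complex.normSq_apply, sq, add_comm, neg_div]

theorem abs_geom_sum_neg_le_two {q : ℝ} (hq₀ : 0 ≤ q) (hq₁ : q ≤ 1) (N : ℕ) :
    |∑ n ∈ Finset.range N, (-q) ^ n| ≤ 2 := by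
  have h := mul_neg_geom_sum (-q) N
  rw [sub_neg_eq_add] at h
  have hpow : |(-q) ^ N| ≤ 1 := by
    rw [abs_pow, abs_neg, abs_of_nonneg hq₀]
    exact pow_le_one₀ hq₀ hq₁
  have h1 : |(1 + q) * ∑ n ∈ Finset.range N, (-q) ^ n| ≤ 2 := by
    rw [h]
    linarith [abs_sub (1 : ℝ) ((-q) ^ N), abs_one (α := ℝ)]
  rw [abs_mul, abs_of_pos (by linarith)] at h1
  nlinarith [abs_nonneg (∑ n ∈ Finset.range N, (-q) ^ n)]

theorem neg_one_pow_mul_exp_eq (n : ℕ) (x : ℝ) :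
    (-1) ^ n * exp (-2 * (n + 1) * x) = exp (-2 * x) * (-exp (-2 * x)) ^ n := by
  rw [neg_pow (exp _), ← exp_nat_mul, mul_left_comm, ← exp_add]
  ring_nf

theorem hasSum_neg_one_pow_mul_exp {x : ℝ} (hx : 0 < x) :
    HasSum (fun n : ℕ ↦ (-1) ^ n * exp (-2 * (n + 1) * x)) ((1 - tanh x) / 2) := by
  have hq : |-exp (-2 * x)| < 1 := by
    rw [abs_neg, abs_of_pos (exp_pos _), exp_lt_one_iff]
    linarith
  have hval : (1 - tanh x) / 2 = exp (-2 * x) * (1 - -exp (-2 * x))⁻¹ := by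
    rw [one_sub_tanh_eq, sub_neg_eq_add]
    field_simp
  simp_rw [neg_one_pow_mul_exp_eq, hval]
  exact (hasSum_geometric_of_abs_lt_one hq).mul_left _

theorem abs_sum_neg_one_pow_mul_exp_le {x : ℝ} (hx : 0 ≤ x) (N : ℕ) :
    |∑ n ∈ Finset.range N, (-1) ^ n * exp (-2 * (n + 1) * x)| ≤ 2 * exp (-2 * x) := by
  simp_rw [neg_one_pow_mul_exp_eq, ← Finset.mul_sum]
  rw [abs_mul, abs_of_pos (exp_pos _), mul_comm]
  gcongr
  exact abs_geom_sum_neg_le_two (exp_pos _).le (exp_le_one_iff.2 (by linarith)) N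

theorem tendsto_sum_integral_sin_mul_tanh_sub_one {b : ℝ} (hb : 0 < b) (z : ℝ) :
    Tendsto (fun N ↦ ∑ n ∈ Finset.range N, -2 * (-1) ^ n * (z / (z ^ 2 + (2 * b * (n + 1)) ^ 2)))
      atTop (𝓝 (∫ v in Ioi 0, sin (z * v) * (tanh (b * v) - 1))) := by
  set F : ℕ → ℝ → ℝ := fun N v ↦
    -2 * sin (z * v) * ∑ n ∈ Finset.range N, (-1) ^ n * exp (-2 * (n + 1) * (b * v))
  have hterm (n : ℕ) (v : ℝ) : -2 * sin (z * v) * ((-1) ^ n * exp (-2 * (n + 1) * (b * v)))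
      = -2 * (-1) ^ n * (sin (z * v) * exp (-(2 * b * (n + 1)) * v)) := by
    ring_nf
  have hc (n : ℕ) : 0 < 2 * b * (n + 1) := by positivity
  have hF (N : ℕ) : ∫ v in Ioi 0, F N v
      = ∑ n ∈ Finset.range N, -2 * (-1) ^ n * (z / (z ^ 2 + (2 * b * (n + 1)) ^ 2)) := by
    simp only [F, Finset.mul_sum, hterm]
    rw [integral_finsetSum _ fun n _ ↦ (integrableOn_sin_mul_exp_neg_mul z (hc n)).const_mul _]
    simp only [integral_const_mul, integral_sin_mul_exp_neg_mul z (hc _)]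
  simp_rw [← hF]
  refine tendsto_integral_of_dominated_convergence (fun v ↦ 4 * exp (-(2 * b) * v))
    (fun N ↦ by fun_prop) ((exp_neg_integrableOn_Ioi 0 (by positivity)).const_mul 4) (fun N ↦ ?_) ?_
  · filter_upwards [ae_restrict_mem measurableSet_Ioi] with v (hv : 0 < v)
    have hbv : 0 ≤ b * v := by positivity
    rw [norm_eq_abs, abs_mul, abs_mul, abs_neg, abs_two]
    calc 2 * |sin (z * v)| * |∑ n ∈ Finset.range N, (-1) ^ n * exp (-2 * (n + 1) * (b * v))|
        ≤ 2 * 1 * (2 * exp (-2 * (b * v))) := by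
          gcongr
          exacts [abs_sin_le_one _, abs_sum_neg_one_pow_mul_exp_le hbv N]
      _ = _ := by ring_nf
  · filter_upwards [ae_restrict_mem measurableSet_Ioi] with v (hv : 0 < v)
    have h := (hasSum_neg_one_pow_mul_exp (mul_pos hb hv)).tendsto_sum_nat.const_mul
      (-2 * sin (z * v))
    convert h using 2
    ring

lemma Complex.ofReal_mul_I_mem_integerComplement {a : ℝ} (ha : a ≠ 0) :
    (a : ℂ) * Complex.I ∈ Complex.integerComplement := by
  rintro ⟨n, hn⟩
  exact ha (by simpa using congrArg Complex.im hn.symm)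

theorem hasSum_two_mul_div_sq_add_sq {a : ℝ} (ha : a ≠ 0) :
    HasSum (fun n : ℕ ↦ 2 * a / (a ^ 2 + (n + 1) ^ 2))
      (π * cosh (π * a) / sinh (π * a) - 1 / a) := by
  have hx := Complex.ofReal_mul_I_mem_integerComplement ha
  have hcot := (summable_cotTerm hx).hasSum
  rw [← cot_series_rep' hx] at hcot
  have hsinh : (sinh (π * a) : ℂ) ≠ 0 := by
    exact_mod_cast sinh_ne_zero.mpr (mul_ne_zero pi_ne_zero ha)
  have hterm (n : ℕ) : ((2 * a / (a ^ 2 + (n + 1) ^ 2) : ℝ) : ℂ)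
      = Complex.I * cotTerm (a * Complex.I) n := by
    have hpos : (a:ℂ) ^ 2 + (n + 1) ^ 2 ≠ 0 := by
      exact_mod_cast (by positivity : a ^ 2 + ((n:ℝ) + 1) ^ 2 ≠ 0)
    rw [cotTerm_identity hx]
    have h1 : ((a:ℂ) * Complex.I + (n + 1)) * ((a:ℂ) * Complex.I - (n + 1))
        = -((a:ℂ) ^ 2 + (n + 1) ^ 2) := by
      linear_combination (a:ℂ)^2 * Complex.I_sq
    rw [h1]
    push_cast
    field_simp
    linear_combination (a : ℂ) * Complex.I_sq
  have hval : ((π * cosh (π * a) / sinh (π * a) - 1 / a : ℝ) : ℂ)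
      = Complex.I * (π * Complex.cot (π * (a * Complex.I)) - 1 / (a * Complex.I)) := by
    rw [← mul_assoc, Complex.cot_eq_cos_div_sin, Complex.cos_mul_I, Complex.sin_mul_I]
    push_cast
    field_simp
  rw [← Complex.hasSum_ofReal, funext hterm, hval]
  exact hcot.mul_left Complex.I

lemma cosh_two_mul_div_sinh_two_mul_sub {y : ℝ} (hy : y ≠ 0) :
    cosh (2 * y) / sinh (2 * y) - cosh y / sinh y = -1 / sinh (2 * y) := by
  have hs : sinh y ≠ 0 := sinh_ne_zero.mpr hy
  have hs2 : sinh (2 * y) ≠ 0 := sinh_ne_zero.mpr (mul_ne_zero two_ne_zero hy)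
  rw [sinh_two_mul, cosh_two_mul] at *
  field_simp
  nlinarith [cosh_sq_sub_sinh_sq y]

theorem hasSum_neg_one_pow_mul_two_mul_div_sq_add_sq {a : ℝ} (ha : a ≠ 0) :
    HasSum (fun n : ℕ ↦ (-1) ^ n * (2 * a / (a ^ 2 + (n + 1) ^ 2)))
      (1 / a - π / sinh (π * a)) := by
  set f : ℕ → ℝ := fun n ↦ 2 * a / (a ^ 2 + (n + 1) ^ 2)
  have hf := hasSum_two_mul_div_sq_add_sq ha
  have ha2 : a / 2 ≠ 0 := div_ne_zero ha two_ne_zero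
  -- the odd-indexed terms of the series at `a` are half the terms of the series at `a / 2`
  have hodd : HasSum (fun k ↦ f (2 * k + 1))
      ((π * cosh (π * (a / 2)) / sinh (π * (a / 2)) - 1 / (a / 2)) / 2) := by
    refine ((hasSum_two_mul_div_sq_add_sq ha2).div_const 2).congr_fun fun k ↦ ?_
    simp only [f]
    push_cast
    field_simp
    ring
  have heven : HasSum (fun k ↦ f (2 * k)) (∑' k, f (2 * k)) :=
    (hf.summable.comp_injective (mul_right_injective₀ two_ne_zero)).hasSum
  have hsum := (heven.even_add_odd hodd).unique hf
  have halt := HasSum.even_add_odd (f := fun n ↦ (-1) ^ n * f n)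
    (heven.congr_fun fun k ↦ by simp [pow_mul])
    (hodd.neg.congr_fun fun k ↦ by simp [pow_succ, pow_mul])
  have hcoth := cosh_two_mul_div_sinh_two_mul_sub (mul_ne_zero pi_ne_zero ha2)
  rw [show 2 * (π * (a / 2)) = π * a by ring] at hcoth
  convert halt using 1
  linear_combination -hsum - π * hcoth

theorem integral_cos_mul_div_cosh_mul_sq {b : ℝ} (hb : 0 < b) {z : ℝ} (hz : z ≠ 0) :
    ∫ v in Ioi 0, cos (z * v) / cosh (b * v) ^ 2
      = π * z / (2 * b ^ 2 * sinh (π * z / (2 * b))) := by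
  obtain ⟨a, rfl⟩ : ∃ a, z = 2 * b * a := ⟨z / (2 * b), by field_simp⟩
  have ha : a ≠ 0 := right_ne_zero_of_mul hz
  have hseries := (hasSum_neg_one_pow_mul_two_mul_div_sq_add_sq ha).mul_left (-1 / (2 * b))
  have hI := tendsto_nhds_unique (tendsto_sum_integral_sin_mul_tanh_sub_one hb (2 * b * a))
    (hseries.congr_fun fun n ↦ by field_simp).tendsto_sum_nat
  rw [integral_cos_mul_div_cosh_sq_eq_integral_sin_mul_tanh hb, hI,
    show π * (2 * b * a) / (2 * b) = π * a by field_simp]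
  field_simp
  ring

/-- For real `z ≠ 0`, `∫_0^∞ cos(zv)/cosh²(πv) dv = z/(2π sinh(z/2))`. -/
theorem integral_cos_div_cosh_sq (z : ℝ) (hz : z ≠ 0) :
    ∫ v in Set.Ioi (0:ℝ), Real.cos (z * v) / Real.cosh (Real.pi * v) ^ 2
      = z / (2 * Real.pi * Real.sinh (z / 2)) := by
  rw [integral_cos_mul_div_cosh_mul_sq pi_pos hz, show π * z / (2 * π) = z / 2 by field_simp]
  field_simp
end

section
/- For ℓ ≥ 1 and any integer p with -1 ≤ p ≤ ℓ-1, the ℓ-th forward difference satisfies Δ^ℓ[ C(x+p, ℓ) ψ(x) ] = H_ℓ + ψ(x+p+1) for all x > 0, where C(x+p,ℓ) = (x+p)(x+p-1)···(x+p-ℓ+1)/ℓ! is the generalized binomial coefficient. -/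
/-- The forward difference operator `Δf(x) = f(x+1) - f(x)`. -/
def deltaOp (f : ℝ → ℝ) : ℝ → ℝ := fun x => f (x + 1) - f x

/-- The generalized binomial coefficient `C(y,ℓ) = y(y-1)⋯(y-ℓ+1)/ℓ!`. -/
noncomputable def genBinom (y : ℝ) (ℓ : ℕ) : ℝ :=
  (∏ i ∈ Finset.range ℓ, (y - i)) / (Nat.factorial ℓ)

/-- The digamma function `ψ = Γ'/Γ`. -/
noncomputable def digamma (x : ℝ) : ℝ := deriv (fun y => Real.log (Real.Gamma y)) x

/-!
Since `ψ(y + 1) = ψ(y) + 1/y` and `C(y + 1, m + 1) - C(y, m + 1) = C(y, m)`, one application of `Δ`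
turns `C(y + p, m + 1) ψ(y)` into `C(y + p, m) ψ(y + 1) + C(y + p, m + 1) / y`. The first term is
the case `(m, p - 1)` shifted by one, so induction on `ℓ` applies. For `0 ≤ p ≤ m` the polynomial
`C(y + p, m + 1)` vanishes at `y = 0`, so the second term is a polynomial of degree `m` with leading
coefficient `1 / (m + 1)!`, and its `m`-th difference is `1 / (m + 1)`; these contributions add up to
`H_ℓ`. For `p = -1` one evaluates `ψ` at `y` instead of `y + 1` in the product rule, which keeps
`p = -1` and makes the second term `C(y, m + 1) / y`.
-/

open Finset Polynomial fwdDiff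

lemma fwdDiff_iter_congr {M G : Type*} [AddCommMonoid M] [AddCommGroup G] {h : M}
    {f g : M → G} {n : ℕ} {x : M} (hfg : ∀ k ≤ n, f (x + k • h) = g (x + k • h)) :
    Δ_[h] ^[n] f x = Δ_[h] ^[n] g x := by
  simp only [fwdDiff_iter_eq_sum_shift]
  exact sum_congr rfl fun k hk => by rw [hfg k (Nat.lt_succ_iff.1 (mem_range.1 hk))]

lemma fwdDiff_iter_fun_add {M G : Type*} [AddCommMonoid M] [AddCommGroup G] (h : M)
    (f g : M → G) (n : ℕ) (x : M) :
    Δ_[h] ^[n] (fun y => f y + g y) x = Δ_[h] ^[n] f x + Δ_[h] ^[n] g x :=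
  congrFun (fwdDiff_iter_add h f g n) x

lemma fwdDiff_iter_congr_of_pos {f g : ℝ → ℝ} {n : ℕ} {x : ℝ} (hfg : ∀ y, 0 < y → f y = g y)
    (hx : 0 < x) : Δ_[1] ^[n] f x = Δ_[1] ^[n] g x :=
  fwdDiff_iter_congr fun k _ => hfg _ (by rw [nsmul_one]; positivity)

lemma deltaOp_eq_fwdDiff : deltaOp = Δ_[1] := rfl

lemma differentiableAt_log_Gamma_of_pos {x : ℝ} (hx : 0 < x) :
    DifferentiableAt ℝ (fun y => Real.log (Real.Gamma y)) x :=
  (Real.differentiableAt_Gamma fun m => by linarith [(m.cast_nonneg : (0 : ℝ) ≤ m)]).log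
    (Real.Gamma_pos_of_pos hx).ne'

lemma digamma_add_one {x : ℝ} (hx : 0 < x) : digamma (x + 1) = digamma x + x⁻¹ := by
  have hlog : (fun y => Real.log (Real.Gamma (y + 1)))
      =ᶠ[nhds x] fun y => Real.log y + Real.log (Real.Gamma y) := by
    filter_upwards [eventually_gt_nhds hx] with y hy
    rw [Real.Gamma_add_one hy.ne', Real.log_mul hy.ne' (Real.Gamma_pos_of_pos hy).ne']
  rw [digamma, ← deriv_comp_add_const, hlog.deriv_eq,
    deriv_fun_add (Real.differentiableAt_log hx.ne') (differentiableAt_log_Gamma_of_pos hx),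
    Real.deriv_log, digamma, add_comm]

lemma genBinom_add_one_succ (z : ℝ) (m : ℕ) :
    genBinom (z + 1) (m + 1) = genBinom z m + genBinom z (m + 1) := by
  have hprod : ∏ i ∈ range m, (z + 1 - ((i + 1 : ℕ) : ℝ)) = ∏ i ∈ range m, (z - i) :=
    prod_congr rfl fun i _ => by push_cast; ring
  simp only [genBinom, prod_range_succ' (fun i => z + 1 - (i : ℝ)), hprod, prod_range_succ,
    Nat.factorial_succ]
  push_cast
  field_simp
  ring

lemma fwdDiff_iter_genBinom_div_self {m q : ℕ} (hq : q ≤ m) {x : ℝ} (hx : 0 < x) :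
    Δ_[1] ^[m] (fun y => genBinom (y + q) (m + 1) / y) x = 1 / (m + 1) := by
  have hqm : q ∈ range (m + 1) := mem_range.2 (Nat.lt_succ_of_le hq)
  -- `genBinom (y + q) (m + 1) = y * P.eval y / (m + 1)!`: the factor `i = q` of the product is `y`
  set P : ℝ[X] := ∏ i ∈ (range (m + 1)).erase q, (X + C ((q : ℝ) - i))
  have hP : P.Monic := monic_prod_of_monic _ _ fun i _ => monic_X_add_C _
  have hdeg : P.natDegree = m := by
    rw [natDegree_prod_of_monic _ _ fun i _ => monic_X_add_C _]
    simp only [natDegree_X_add_C, sum_const, smul_eq_mul, mul_one, card_erase_of_mem hqm,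
      card_range, Nat.add_sub_cancel]
  have hfactor : ∀ y, 0 < y →
      genBinom (y + q) (m + 1) / y = (((m + 1).factorial : ℝ)⁻¹ • P.eval) y := by
    intro y hy
    rw [genBinom, ← mul_prod_erase _ _ hqm]
    simp only [P, eval_prod, eval_add, eval_X, eval_C, Pi.smul_apply, smul_eq_mul,
      add_sub_cancel_right]
    field_simp
    exact prod_congr rfl fun i _ => add_sub_assoc ..
  rw [fwdDiff_iter_congr_of_pos hfactor hx, fwdDiff_iter_const_smul, ← hdeg,
    P.fwdDiff_iter_degree_eq_factorial, hP.leadingCoeff, hdeg, one_smul, Pi.smul_apply,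
    Pi.natCast_apply, smul_eq_mul, Nat.factorial_succ]
  push_cast
  field_simp

lemma fwdDiff_genBinom_mul_digamma (a : ℝ) (m : ℕ) {y : ℝ} (hy : 0 < y) :
    Δ_[1] (fun z => genBinom (z + a) (m + 1) * digamma z) y
      = genBinom (y + a) m * digamma (y + 1) + genBinom (y + a) (m + 1) / y := by
  rw [fwdDiff, add_right_comm, genBinom_add_one_succ, digamma_add_one hy]
  ring

lemma fwdDiff_genBinom_mul_digamma' (a : ℝ) (m : ℕ) {y : ℝ} (hy : 0 < y) :
    Δ_[1] (fun z => genBinom (z + (a - 1)) (m + 1) * digamma z) y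
      = genBinom (y + (a - 1)) m * digamma y + genBinom (y + a) (m + 1) / y := by
  rw [fwdDiff, add_right_comm, genBinom_add_one_succ, digamma_add_one hy,
    show y + a = y + (a - 1) + 1 by ring, genBinom_add_one_succ]
  ring

theorem fwdDiff_iter_genBinom_mul_digamma (ℓ q : ℕ) (hq : q ≤ ℓ) {x : ℝ} (hx : 0 < x) :
    Δ_[1] ^[ℓ] (fun y => genBinom (y + (q - 1)) ℓ * digamma y) x
      = ∑ k ∈ range ℓ, 1 / ((k : ℝ) + 1) + digamma (x + q) := by
  induction ℓ generalizing q x with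
  | zero =>
    obtain rfl : q = 0 := by omega
    simp [genBinom]
  | succ m ih =>
    rw [Function.iterate_succ_apply, sum_range_succ]
    cases q with
    | zero =>
      rw [fwdDiff_iter_congr_of_pos (fun y hy => fwdDiff_genBinom_mul_digamma' _ m hy) hx,
        fwdDiff_iter_fun_add, ih 0 m.zero_le hx, fwdDiff_iter_genBinom_div_self m.zero_le hx]
      ring
    | succ q =>
      have hq' : q ≤ m := Nat.le_of_succ_le_succ hq
      have ih_shift := ih q hq' (x := x + 1) (by positivity)
      rw [← fwdDiff_iter_comp_add] at ih_shift
      simp only [add_add_sub_cancel] at ih_shift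
      simp only [Nat.cast_succ, add_sub_cancel_right]
      rw [fwdDiff_iter_congr_of_pos (fun y hy => fwdDiff_genBinom_mul_digamma _ m hy) hx,
        fwdDiff_iter_fun_add, ih_shift, fwdDiff_iter_genBinom_div_self hq' hx, add_assoc x,
        add_comm 1 (q : ℝ)]
      ring

theorem deltaOp_binom_digamma_general (ℓ : ℕ) (p : ℤ) (hp1 : -1 ≤ p)
    (hp2 : p ≤ (ℓ : ℤ) - 1) (x : ℝ) (hx : 0 < x) :
    (deltaOp^[ℓ] fun y => genBinom (y + p) ℓ * digamma y) x
      = (∑ k ∈ Finset.range ℓ, (1 : ℝ) / (k + 1)) + digamma (x + p + 1) := by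
  obtain ⟨q, rfl⟩ : ∃ q : ℕ, p = q - 1 := ⟨(p + 1).toNat, by omega⟩
  push_cast
  rw [deltaOp_eq_fwdDiff, fwdDiff_iter_genBinom_mul_digamma ℓ q (by omega) hx, add_assoc x,
    sub_add_cancel]

/-- For `ℓ ≥ 1`, an integer `-1 ≤ p ≤ ℓ-1`, and `x > 0`:
`Δ^ℓ[C(x+p,ℓ) ψ(x)] = H_ℓ + ψ(x+p+1)`. -/
theorem deltaOp_binom_digamma (ℓ : ℕ) (hℓ : 1 ≤ ℓ) (p : ℤ) (hp1 : -1 ≤ p)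
    (hp2 : p ≤ (ℓ : ℤ) - 1) (x : ℝ) (hx : 0 < x) :
    (deltaOp^[ℓ] fun y => genBinom (y + p) ℓ * digamma y) x
      = (∑ k ∈ Finset.range ℓ, (1 : ℝ) / (k + 1)) + digamma (x + p + 1) :=
  deltaOp_binom_digamma_general ℓ p hp1 hp2 x hx
end

section
/- For real β > 0, ∫_0^∞ x/((x² + β²)²(e^{2πx} - 1)) dx = -1/(8β³) - 1/(4β²) + ψ'(β)/(4β), where ψ' is the trigamma function. -/
/-- The trigamma function `ψ'`, the derivative of the digamma function. -/
noncomputable def trigamma (x : ℝ) : ℝ := deriv digamma x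

/-!
The Mittag-Leffler expansion of the cotangent, taken at `i x`, gives for `x > 0`
`1 / (e^{2πx} - 1) = 1 / (2πx) - 1 / 2 + (1 / π) ∑_{n ≥ 1} x / (x² + n²)`.
Multiplying by `x / (x² + β²)²` splits the integrand into two rational functions and a series of
nonnegative rational functions, each integrated by an explicit antiderivative; the `n`-th term
contributes `π / (4β(β + n)²)`. Differentiating the Bohr–Mollerup limit for `log Γ` termwise, twice,
gives `ψ'(β) = β⁻² + ∑_{n ≥ 1} (β + n)⁻²`, and the constants combine to the stated value.
-/

open Real MeasureTheory Filter Topology Set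

lemma summable_one_div_nat_add_one_sq : Summable fun m : ℕ => 1 / ((m : ℝ) + 1) ^ 2 := by
  simpa using (summable_nat_add_iff 1).mpr (Real.summable_one_div_nat_pow.mpr one_lt_two)

lemma summable_one_div_add_nat_add_one_sq {x : ℝ} (hx : 0 ≤ x) :
    Summable fun m : ℕ => 1 / (x + m + 1) ^ 2 :=
  summable_one_div_nat_add_one_sq.of_nonneg_of_le (fun m => by positivity) fun m => by
    gcongr; linarith

lemma abs_one_div_sub_one_div_add_le {y : ℝ} (hy : 0 ≤ y) (m : ℕ) :
    |1 / ((m : ℝ) + 1) - 1 / (y + m + 1)| ≤ y * (1 / ((m : ℝ) + 1) ^ 2) := by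
  have h : 1 / ((m : ℝ) + 1) - 1 / (y + m + 1) = y / ((m + 1) * (y + m + 1)) := by
    field_simp; ring
  rw [h, abs_of_nonneg (by positivity), mul_one_div, sq]
  gcongr
  linarith

lemma hasDerivAt_logGammaSeq {y : ℝ} (hy : 0 < y) (n : ℕ) :
    HasDerivAt (fun z => BohrMollerup.logGammaSeq z n)
      (log n - ∑ m ∈ Finset.range (n + 1), 1 / (y + m)) y := by
  have hsum : HasDerivAt (fun z => ∑ m ∈ Finset.range (n + 1), log (z + m))
      (∑ m ∈ Finset.range (n + 1), 1 / (y + m)) y :=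
    HasDerivAt.fun_sum fun m _ => by
      simpa using ((hasDerivAt_id y).add_const (m : ℝ)).log (by positivity)
  have h := (((hasDerivAt_id y).mul_const (log n)).add_const (log n.factorial)).sub hsum
  exact h.congr_deriv (by simp)

lemma log_sub_sum_one_div_eq (y : ℝ) (n : ℕ) :
    log n - ∑ m ∈ Finset.range (n + 1), 1 / (y + m) = (log n - harmonic n) - 1 / y
      + ∑ m ∈ Finset.range n, (1 / ((m : ℝ) + 1) - 1 / (y + m + 1)) := by
  rw [Finset.sum_range_succ', Finset.sum_sub_distrib, harmonic]
  push_cast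
  simp only [add_assoc, one_div]
  ring

lemma hasDerivAt_log_Gamma {x : ℝ} (hx : 0 < x) :
    HasDerivAt (fun y => log (Gamma y))
      (-eulerMascheroniConstant - 1 / x + ∑' m : ℕ, (1 / ((m : ℝ) + 1) - 1 / (x + m + 1))) x := by
  set s := Ioo 0 (x + 1)
  have hconst : TendstoUniformlyOn (fun (_ : ℕ) (y : ℝ) => 1 / y) (fun y => 1 / y) atTop s :=
    fun _ hu => Eventually.of_forall fun _ _ _ => refl_mem_uniformity hu
  have hγ : Tendsto (fun n : ℕ => log n - harmonic n) atTop (𝓝 (-eulerMascheroniConstant)) := by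
    simpa using tendsto_harmonic_sub_log.neg
  have hseries := tendstoUniformlyOn_tsum_nat (summable_one_div_nat_add_one_sq.mul_left (x + 1))
    (f := fun m y => 1 / ((m : ℝ) + 1) - 1 / (y + m + 1)) (s := s) fun m y hy =>
      (abs_one_div_sub_one_div_add_le hy.1.le m).trans (by gcongr; exact hy.2.le)
  refine hasDerivAt_of_tendstoUniformlyOn isOpen_Ioo
    (((hγ.tendstoUniformlyOn_const s).sub hconst).add hseries)
    (Eventually.of_forall fun n y hy => ?_)
    (fun y hy => BohrMollerup.tendsto_log_gamma hy.1) ⟨hx, by linarith⟩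
  simp only [Pi.add_apply, Pi.sub_apply]
  rw [← log_sub_sum_one_div_eq]
  exact hasDerivAt_logGammaSeq hy.1 n

lemma digamma_eq_tsum {x : ℝ} (hx : 0 < x) : digamma x
    = -eulerMascheroniConstant - 1 / x + ∑' m : ℕ, (1 / ((m : ℝ) + 1) - 1 / (x + m + 1)) :=
  (hasDerivAt_log_Gamma hx).deriv

lemma hasDerivAt_tsum_one_div_sub_one_div_add {x : ℝ} (hx : 0 < x) :
    HasDerivAt (fun y => ∑' m : ℕ, (1 / ((m : ℝ) + 1) - 1 / (y + m + 1)))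
      (∑' m : ℕ, 1 / (x + m + 1) ^ 2) x := by
  refine hasDerivAt_tsum_of_isPreconnected
    (g := fun (m : ℕ) (y : ℝ) => 1 / ((m : ℝ) + 1) - 1 / (y + m + 1))
    (g' := fun (m : ℕ) (y : ℝ) => 1 / (y + m + 1) ^ 2) summable_one_div_nat_add_one_sq isOpen_Ioi
    (convex_Ioi 0).isPreconnected (fun m y (hy : 0 < y) => ?_) (fun m y (hy : 0 < y) => ?_) hx
    ((summable_one_div_nat_add_one_sq.mul_left x).of_norm_bounded
      (abs_one_div_sub_one_div_add_le hx.le)) hx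
  · have hne : y + (m + 1) ≠ 0 := by positivity
    simpa [div_eq_mul_inv, sq, add_assoc] using
      (((hasDerivAt_id y).add_const ((m : ℝ) + 1)).inv hne).const_sub (1 / ((m : ℝ) + 1))
  · rw [norm_of_nonneg (by positivity)]
    gcongr
    linarith

lemma trigamma_eq_tsum {x : ℝ} (hx : 0 < x) :
    trigamma x = 1 / x ^ 2 + ∑' m : ℕ, 1 / (x + m + 1) ^ 2 := by
  have hinv : HasDerivAt (fun y : ℝ => -eulerMascheroniConstant - 1 / y) (1 / x ^ 2) x := by
    simpa using (hasDerivAt_inv hx.ne').const_sub (-eulerMascheroniConstant)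
  have hdigamma : digamma =ᶠ[𝓝 x] fun y =>
      -eulerMascheroniConstant - 1 / y + ∑' m : ℕ, (1 / ((m : ℝ) + 1) - 1 / (y + m + 1)) :=
    (eventually_gt_nhds hx).mono fun y hy => digamma_eq_tsum hy
  rw [trigamma, hdigamma.deriv_eq]
  exact (hinv.add (hasDerivAt_tsum_one_div_sub_one_div_add hx)).deriv

lemma integrableOn_Ioi_and_integral_eq_of_hasDerivAt {f F : ℝ → ℝ} {a L : ℝ}
    (hF : ∀ x ∈ Ici a, HasDerivAt F (f x) x) (hf : ∀ x ∈ Ioi a, 0 ≤ f x)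
    (hL : Tendsto F atTop (𝓝 L)) :
    IntegrableOn f (Ioi a) ∧ ∫ x in Ioi a, f x = L - F a :=
  ⟨integrableOn_Ioi_deriv_of_nonneg' hF hf hL, integral_Ioi_of_hasDerivAt_of_nonneg' hF hf hL⟩

section RationalIntegrals

variable {a : ℝ}

lemma tendsto_inv_sq_add_sq_atTop : Tendsto (fun x : ℝ => (x ^ 2 + a ^ 2)⁻¹) atTop (𝓝 0) :=
  tendsto_inv_atTop_zero.comp (tendsto_atTop_add_const_right _ _ (tendsto_pow_atTop two_ne_zero))

lemma tendsto_div_sq_add_sq_atTop : Tendsto (fun x : ℝ => x / (x ^ 2 + a ^ 2)) atTop (𝓝 0) := by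
  refine squeeze_zero' ?_ ?_ tendsto_inv_atTop_zero
  · filter_upwards [eventually_ge_atTop 0] with x hx using by positivity
  · filter_upwards [eventually_gt_atTop 0] with x hx
    calc x / (x ^ 2 + a ^ 2) ≤ x / x ^ 2 := by gcongr; nlinarith
      _ = x⁻¹ := by field_simp

lemma tendsto_div_sq_add_sq_sq_atTop :
    Tendsto (fun x : ℝ => x / (x ^ 2 + a ^ 2) ^ 2) atTop (𝓝 0) := by
  simpa [div_eq_mul_inv, pow_two, mul_assoc] using
    tendsto_div_sq_add_sq_atTop.mul tendsto_inv_sq_add_sq_atTop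

lemma tendsto_arctan_div_atTop (ha : 0 < a) :
    Tendsto (fun x : ℝ => arctan (x / a)) atTop (𝓝 (π / 2)) :=
  tendsto_nhds_of_tendsto_nhdsWithin (tendsto_arctan_atTop.comp (tendsto_id.atTop_div_const ha))

lemma hasDerivAt_arctan_div (ha : a ≠ 0) (x : ℝ) :
    HasDerivAt (fun x : ℝ => arctan (x / a)) (a / (x ^ 2 + a ^ 2)) x := by
  refine ((hasDerivAt_arctan (x / a)).comp x ((hasDerivAt_id x).div_const a)).congr_deriv ?_
  field_simp
  ring

lemma hasDerivAt_div_sq_add_sq (ha : a ≠ 0) (x : ℝ) :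
    HasDerivAt (fun x : ℝ => x / (x ^ 2 + a ^ 2)) ((a ^ 2 - x ^ 2) / (x ^ 2 + a ^ 2) ^ 2) x := by
  refine ((hasDerivAt_id x).div ((hasDerivAt_pow 2 x).add_const _) (by positivity)).congr_deriv ?_
  simp only [one_mul, id_eq, Nat.cast_ofNat, Nat.add_one_sub_one, pow_one]
  ring

lemma hasDerivAt_div_sq_add_sq_sq (ha : a ≠ 0) (x : ℝ) :
    HasDerivAt (fun x : ℝ => x / (x ^ 2 + a ^ 2) ^ 2)
      ((a ^ 2 - 3 * x ^ 2) / (x ^ 2 + a ^ 2) ^ 3) x := by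
  refine ((hasDerivAt_id x).div (((hasDerivAt_pow 2 x).add_const _).pow 2)
    (pow_ne_zero 2 (by positivity))).congr_deriv ?_
  simp only [Pi.pow_apply, id]
  field_simp
  ring

lemma hasDerivAt_inv_sq_add_sq (ha : a ≠ 0) (x : ℝ) :
    HasDerivAt (fun x : ℝ => (x ^ 2 + a ^ 2)⁻¹) (-(2 * x) / (x ^ 2 + a ^ 2) ^ 2) x := by
  refine (((hasDerivAt_pow 2 x).add_const _).inv (by positivity)).congr_deriv ?_
  simp

lemma integral_one_div_sq_add_sq_sq (ha : 0 < a) :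
    IntegrableOn (fun x : ℝ => 1 / (x ^ 2 + a ^ 2) ^ 2) (Ioi 0) ∧
      ∫ x in Ioi (0 : ℝ), 1 / (x ^ 2 + a ^ 2) ^ 2 = π / (4 * a ^ 3) := by
  have hF (x : ℝ) (_ : x ∈ Ici (0 : ℝ)) : HasDerivAt
      (fun x => 1 / (2 * a ^ 2) * (x / (x ^ 2 + a ^ 2)) + 1 / (2 * a ^ 3) * arctan (x / a))
      (1 / (x ^ 2 + a ^ 2) ^ 2) x := by
    refine (((hasDerivAt_div_sq_add_sq ha.ne' x).const_mul _).add
      ((hasDerivAt_arctan_div ha.ne' x).const_mul _)).congr_deriv ?_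
    field_simp
    ring
  have hL := ((tendsto_div_sq_add_sq_atTop (a := a)).const_mul (1 / (2 * a ^ 2))).add
    ((tendsto_arctan_div_atTop ha).const_mul (1 / (2 * a ^ 3)))
  have h := integrableOn_Ioi_and_integral_eq_of_hasDerivAt hF (fun x _ => by positivity) hL
  refine ⟨h.1, h.2.trans ?_⟩
  field_simp
  simp only [mul_zero, zero_add, zero_pow two_ne_zero, zero_div,
    arctan_zero, add_zero, sub_zero]
  ring

lemma integral_div_sq_add_sq_sq (ha : 0 < a) :
    IntegrableOn (fun x : ℝ => x / (x ^ 2 + a ^ 2) ^ 2) (Ioi 0) ∧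
      ∫ x in Ioi (0 : ℝ), x / (x ^ 2 + a ^ 2) ^ 2 = 1 / (2 * a ^ 2) := by
  have hF (x : ℝ) (_ : x ∈ Ici (0 : ℝ)) : HasDerivAt (fun x => -(1 / 2) * (x ^ 2 + a ^ 2)⁻¹)
      (x / (x ^ 2 + a ^ 2) ^ 2) x := by
    refine ((hasDerivAt_inv_sq_add_sq ha.ne' x).const_mul _).congr_deriv ?_
    ring
  have hL := (tendsto_inv_sq_add_sq_atTop (a := a)).const_mul (-(1 / 2))
  have h := integrableOn_Ioi_and_integral_eq_of_hasDerivAt hF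
    (fun x (hx : 0 < x) => by positivity) hL
  refine ⟨h.1, h.2.trans ?_⟩
  simp only [one_div, mul_zero, zero_pow two_ne_zero, zero_add,
    neg_mul, sub_neg_eq_add, mul_inv_rev]
  field_simp

lemma integral_sq_div_sq_add_sq_pow_three (ha : 0 < a) :
    IntegrableOn (fun x : ℝ => x ^ 2 / (x ^ 2 + a ^ 2) ^ 3) (Ioi 0) ∧
      ∫ x in Ioi (0 : ℝ), x ^ 2 / (x ^ 2 + a ^ 2) ^ 3 = π / (16 * a ^ 3) := by
  have hF (x : ℝ) (_ : x ∈ Ici (0 : ℝ)) : HasDerivAt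
      (fun x => 1 / (8 * a ^ 3) * arctan (x / a) + 1 / (8 * a ^ 2) * (x / (x ^ 2 + a ^ 2))
        - 1 / 4 * (x / (x ^ 2 + a ^ 2) ^ 2))
      (x ^ 2 / (x ^ 2 + a ^ 2) ^ 3) x := by
    refine ((((hasDerivAt_arctan_div ha.ne' x).const_mul _).add
      ((hasDerivAt_div_sq_add_sq ha.ne' x).const_mul _)).sub
      ((hasDerivAt_div_sq_add_sq_sq ha.ne' x).const_mul _)).congr_deriv ?_
    field_simp
    ring
  have hL := (((tendsto_arctan_div_atTop ha).const_mul (1 / (8 * a ^ 3))).add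
    ((tendsto_div_sq_add_sq_atTop (a := a)).const_mul (1 / (8 * a ^ 2)))).sub
    ((tendsto_div_sq_add_sq_sq_atTop (a := a)).const_mul (1 / 4))
  have h := integrableOn_Ioi_and_integral_eq_of_hasDerivAt hF (fun x _ => by positivity) hL
  refine ⟨h.1, h.2.trans ?_⟩
  field_simp
  simp only [mul_zero, add_zero, sub_zero, zero_pow two_ne_zero,
    zero_add, zero_div, arctan_zero, zero_mul, sub_self]
  ring

lemma integral_sq_div_sq_add_sq_sq_mul_of_ne (ha : 0 < a) {b : ℝ} (hb : 0 < b) (hab : a ≠ b) :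
    IntegrableOn (fun x : ℝ => x ^ 2 / ((x ^ 2 + a ^ 2) ^ 2 * (x ^ 2 + b ^ 2))) (Ioi 0) ∧
      ∫ x in Ioi (0 : ℝ), x ^ 2 / ((x ^ 2 + a ^ 2) ^ 2 * (x ^ 2 + b ^ 2))
        = π / (4 * a * (a + b) ^ 2) := by
  have hsub : a - b ≠ 0 := sub_ne_zero.mpr hab
  have hadd : a + b ≠ 0 := by positivity
  have hd : a ^ 2 - b ^ 2 ≠ 0 := by rw [sq_sub_sq]; exact mul_ne_zero hadd hsub
  have hF (x : ℝ) (_ : x ∈ Ici (0 : ℝ)) : HasDerivAt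
      (fun x => (a ^ 2 + b ^ 2) / (2 * a * (a ^ 2 - b ^ 2) ^ 2) * arctan (x / a)
        + 1 / (2 * (a ^ 2 - b ^ 2)) * (x / (x ^ 2 + a ^ 2))
        - b / (a ^ 2 - b ^ 2) ^ 2 * arctan (x / b))
      (x ^ 2 / ((x ^ 2 + a ^ 2) ^ 2 * (x ^ 2 + b ^ 2))) x := by
    refine ((((hasDerivAt_arctan_div ha.ne' x).const_mul _).add
      ((hasDerivAt_div_sq_add_sq ha.ne' x).const_mul _)).sub
      ((hasDerivAt_arctan_div hb.ne' x).const_mul _)).congr_deriv ?_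
    field_simp
    ring
  have hL := (((tendsto_arctan_div_atTop ha).const_mul
    ((a ^ 2 + b ^ 2) / (2 * a * (a ^ 2 - b ^ 2) ^ 2))).add
    ((tendsto_div_sq_add_sq_atTop (a := a)).const_mul (1 / (2 * (a ^ 2 - b ^ 2))))).sub
    ((tendsto_arctan_div_atTop hb).const_mul (b / (a ^ 2 - b ^ 2) ^ 2))
  have h := integrableOn_Ioi_and_integral_eq_of_hasDerivAt hF (fun x _ => by positivity) hL
  refine ⟨h.1, h.2.trans ?_⟩
  field_simp
  simp only [mul_zero, add_zero, zero_pow two_ne_zero, zero_add,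
    zero_div, arctan_zero, zero_mul, sub_self, sub_zero]
  ring

lemma integral_sq_div_sq_add_sq_sq_mul (ha : 0 < a) {b : ℝ} (hb : 0 < b) :
    IntegrableOn (fun x : ℝ => x ^ 2 / ((x ^ 2 + a ^ 2) ^ 2 * (x ^ 2 + b ^ 2))) (Ioi 0) ∧
      ∫ x in Ioi (0 : ℝ), x ^ 2 / ((x ^ 2 + a ^ 2) ^ 2 * (x ^ 2 + b ^ 2))
        = π / (4 * a * (a + b) ^ 2) := by
  rcases eq_or_ne a b with rfl | hab
  · simp_rw [← pow_succ]
    refine ⟨(integral_sq_div_sq_add_sq_pow_three ha).1,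
      (integral_sq_div_sq_add_sq_pow_three ha).2.trans ?_⟩
    field_simp
    ring
  · exact integral_sq_div_sq_add_sq_sq_mul_of_ne ha hb hab

end RationalIntegrals

lemma cosh_div_sinh_eq_one_add_two_div {t : ℝ} (ht : 0 < t) :
    cosh t / sinh t = 1 + 2 / (exp (2 * t) - 1) := by
  have h2 : exp (2 * t) = exp t * exp t := by rw [← exp_add]; ring_nf
  have h3 : exp t ^ 2 - 1 ≠ 0 := by
    rw [sq, ← h2, sub_ne_zero]; exact (one_lt_exp_iff.mpr (by positivity)).ne'
  rw [cosh_eq, sinh_eq, exp_neg, h2]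
  field_simp
  ring

lemma pi_mul_cosh_div_sinh_sub_one_div_eq_tsum {x : ℝ} (hx : 0 < x) :
    π * cosh (π * x) / sinh (π * x) - 1 / x
      = ∑' n : ℕ, 2 * x / (x ^ 2 + ((n : ℝ) + 1) ^ 2) := by
  have hz : (x : ℂ) * Complex.I ∈ Complex.integerComplement :=
    UpperHalfPlane.coe_mem_integerComplement ⟨_, by simpa using hx⟩
  have hterm (n : ℕ) : 1 / ((x : ℂ) * Complex.I - (n + 1)) + 1 / ((x : ℂ) * Complex.I + (n + 1))
      = -Complex.I * ((2 * x / (x ^ 2 + ((n : ℝ) + 1) ^ 2) : ℝ) : ℂ) := by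
    have h1 : (x : ℂ) * Complex.I - (n + 1) ≠ 0 := fun h => by
      simpa [hx.ne'] using congrArg Complex.im h
    have h2 : (x : ℂ) * Complex.I + (n + 1) ≠ 0 := fun h => by
      simpa [hx.ne'] using congrArg Complex.im h
    have h3 : (x : ℂ) ^ 2 + ((n : ℂ) + 1) ^ 2 ≠ 0 := by
      exact_mod_cast (by positivity : x ^ 2 + ((n : ℝ) + 1) ^ 2 ≠ 0)
    push_cast
    field_simp
    ring_nf
    simp
  have h := cot_series_rep' hz
  rw [tsum_congr hterm, tsum_mul_left, ← Complex.ofReal_tsum] at h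
  have hsinh : sinh (π * x) ≠ 0 := (sinh_pos_iff.mpr (by positivity)).ne'
  have hcot : Complex.cot (π * ((x : ℂ) * Complex.I))
      = -Complex.I * (cosh (π * x) / sinh (π * x) : ℝ) := by
    rw [Complex.cot, ← mul_assoc, ← Complex.ofReal_mul, Complex.cos_mul_I, Complex.sin_mul_I]
    have : Complex.sinh (π * x : ℝ) ≠ 0 := by exact_mod_cast hsinh
    push_cast
    field_simp
    simp [neg_div]
  rw [hcot] at h
  apply Complex.ofReal_injective
  have hx' : (x : ℂ) ≠ 0 := by exact_mod_cast hx.ne'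
  rw [← mul_right_inj' (neg_ne_zero.mpr Complex.I_ne_zero), ← h]
  push_cast
  field_simp
  ring_nf
  simp

lemma one_div_exp_two_pi_mul_sub_one_eq {x : ℝ} (hx : 0 < x) :
    1 / (exp (2 * π * x) - 1)
      = 1 / (2 * π * x) - 1 / 2 + 1 / π * ∑' n : ℕ, x / (x ^ 2 + ((n : ℝ) + 1) ^ 2) := by
  have h := pi_mul_cosh_div_sinh_sub_one_div_eq_tsum hx
  rw [mul_div_assoc, cosh_div_sinh_eq_one_add_two_div (by positivity), ← mul_assoc] at h
  simp_rw [mul_div_assoc, tsum_mul_left] at h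
  have hexp : exp (2 * π * x) - 1 ≠ 0 := (sub_pos.mpr (one_lt_exp_iff.mpr (by positivity))).ne'
  field_simp at h ⊢
  linear_combination h

lemma div_sq_add_sq_sq_mul_exp_sub_one_eq {x : ℝ} (hx : 0 < x) (a : ℝ) :
    x / ((x ^ 2 + a ^ 2) ^ 2 * (exp (2 * π * x) - 1))
      = 1 / (2 * π) * (1 / (x ^ 2 + a ^ 2) ^ 2) - 1 / 2 * (x / (x ^ 2 + a ^ 2) ^ 2)
        + 1 / π * ∑' n : ℕ, x ^ 2 / ((x ^ 2 + a ^ 2) ^ 2 * (x ^ 2 + ((n : ℝ) + 1) ^ 2)) := by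
  have hterm (n : ℕ) : x ^ 2 / ((x ^ 2 + a ^ 2) ^ 2 * (x ^ 2 + ((n : ℝ) + 1) ^ 2))
      = x / (x ^ 2 + a ^ 2) ^ 2 * (x / (x ^ 2 + ((n : ℝ) + 1) ^ 2)) := by
    rw [div_mul_div_comm, sq x]
  rw [tsum_congr hterm, tsum_mul_left, div_mul_eq_div_div, div_eq_mul_one_div _ (exp _ - 1),
    one_div_exp_two_pi_mul_sub_one_eq hx]
  have : x ^ 2 + a ^ 2 ≠ 0 := by positivity
  field_simp

lemma integrableOn_div_mul_exp_sub_one {a : ℝ} (ha : 0 < a) :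
    IntegrableOn (fun x : ℝ => x / ((x ^ 2 + a ^ 2) ^ 2 * (exp (2 * π * x) - 1))) (Ioi 0) := by
  refine ((integral_one_div_sq_add_sq_sq ha).1.const_mul (1 / (2 * π))).mono'
    (by fun_prop : Measurable _).aestronglyMeasurable ?_
  filter_upwards [ae_restrict_mem measurableSet_Ioi] with x (hx : 0 < x)
  have hexp : 2 * π * x ≤ exp (2 * π * x) - 1 := by linarith [add_one_le_exp (2 * π * x)]
  have hexp_pos : 0 < exp (2 * π * x) - 1 := by linarith [show 0 < 2 * π * x by positivity]
  rw [norm_of_nonneg (by positivity)]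
  calc x / ((x ^ 2 + a ^ 2) ^ 2 * (exp (2 * π * x) - 1))
      ≤ x / ((x ^ 2 + a ^ 2) ^ 2 * (2 * π * x)) := by gcongr
    _ = 1 / (2 * π) * (1 / (x ^ 2 + a ^ 2) ^ 2) := by field_simp

lemma integrableOn_tsum_sq_div_sq_add_sq_sq_mul {a : ℝ} (ha : 0 < a) :
    IntegrableOn
      (fun x : ℝ => ∑' n : ℕ, x ^ 2 / ((x ^ 2 + a ^ 2) ^ 2 * (x ^ 2 + ((n : ℝ) + 1) ^ 2)))
      (Ioi 0) := by
  refine IntegrableOn.congr_fun ((((integrableOn_div_mul_exp_sub_one ha).sub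
    ((integral_one_div_sq_add_sq_sq ha).1.const_mul (1 / (2 * π)))).add
    ((integral_div_sq_add_sq_sq ha).1.const_mul (1 / 2))).const_mul π)
    (fun x (hx : 0 < x) => ?_) measurableSet_Ioi
  simp only [Pi.add_apply, Pi.sub_apply, div_sq_add_sq_sq_mul_exp_sub_one_eq hx]
  field_simp
  ring

lemma integral_tsum_sq_div_sq_add_sq_sq_mul {a : ℝ} (ha : 0 < a) :
    ∫ x in Ioi (0 : ℝ), ∑' n : ℕ, x ^ 2 / ((x ^ 2 + a ^ 2) ^ 2 * (x ^ 2 + ((n : ℝ) + 1) ^ 2))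
      = π / (4 * a) * ∑' n : ℕ, 1 / (a + n + 1) ^ 2 := by
  have hg (n : ℕ) := integral_sq_div_sq_add_sq_sq_mul ha n.cast_add_one_pos
  have hg_int (n : ℕ) :
      ∫ x in Ioi (0 : ℝ), x ^ 2 / ((x ^ 2 + a ^ 2) ^ 2 * (x ^ 2 + ((n : ℝ) + 1) ^ 2))
        = π / (4 * a) * (1 / (a + n + 1) ^ 2) := by
    rw [(hg n).2, ← add_assoc]
    field_simp
  have hg_norm (n : ℕ) :
      ∫ x in Ioi (0 : ℝ), ‖x ^ 2 / ((x ^ 2 + a ^ 2) ^ 2 * (x ^ 2 + ((n : ℝ) + 1) ^ 2))‖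
        = π / (4 * a) * (1 / (a + n + 1) ^ 2) :=
    (integral_congr_ae (Eventually.of_forall fun x => norm_of_nonneg (by positivity))).trans
      (hg_int n)
  rw [← integral_tsum_of_summable_integral_norm (fun n => (hg n).1), ← tsum_mul_left]
  · exact tsum_congr hg_int
  · exact ((summable_one_div_add_nat_add_one_sq ha.le).mul_left _).congr fun n => (hg_norm n).symm

lemma integral_div_sq_add_sq_sq_mul_exp_sub_one {a : ℝ} (ha : 0 < a) :
    ∫ x in Ioi (0 : ℝ), x / ((x ^ 2 + a ^ 2) ^ 2 * (exp (2 * π * x) - 1))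
      = 1 / (8 * a ^ 3) - 1 / (4 * a ^ 2) + 1 / (4 * a) * ∑' n : ℕ, 1 / (a + n + 1) ^ 2 := by
  have hu := integral_one_div_sq_add_sq_sq ha
  have hv := integral_div_sq_add_sq_sq ha
  rw [setIntegral_congr_fun measurableSet_Ioi fun x hx => div_sq_add_sq_sq_mul_exp_sub_one_eq hx a,
    integral_add, integral_sub, integral_const_mul, integral_const_mul, integral_const_mul, hu.2,
    hv.2, integral_tsum_sq_div_sq_add_sq_sq_mul ha]
  · field_simp
    ring
  · exact hu.1.const_mul _
  · exact hv.1.const_mul _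
  · exact (hu.1.const_mul _).sub (hv.1.const_mul _)
  · exact (integrableOn_tsum_sq_div_sq_add_sq_sq_mul ha).const_mul _

/-- Entry 3.415.2 of Gradshteyn–Ryzhik: for real `β > 0`,
`∫_0^∞ x/((x²+β²)²(e^{2πx}-1)) dx = -1/(8β³) - 1/(4β²) + ψ'(β)/(4β)`. -/
theorem GR_3_415_2 (β : ℝ) (hβ : 0 < β) :
    ∫ x in Set.Ioi (0:ℝ), x / ((x ^ 2 + β ^ 2) ^ 2 * (Real.exp (2 * Real.pi * x) - 1))
      = -1 / (8 * β ^ 3) - 1 / (4 * β ^ 2) + trigamma β / (4 * β) := by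
  rw [integral_div_sq_add_sq_sq_mul_exp_sub_one hβ, trigamma_eq_tsum hβ]
  field_simp
  ring
end

section
/- For b > 0 and ℓ ≥ 1, the 2ℓ-th derivative of u ↦ log(1 + bu²) equals 2(-1)^{ℓ-1} b^ℓ (2ℓ-1)! / (1+bu²)^ℓ · T_{2ℓ}(1/√(1+bu²)), where T_n is the Chebyshev polynomial of the first kind. -/
/-!
Put `w t = i√b / (1 - i√b t)`. Then `w' = w²` and `d/dt log (1 + b t²) = -2 Re (w t)`, so the
`(n + 1)`-st derivative of the logarithm is `-2 n! Re (w t ^ (n + 1))`. For `n + 1 = 2ℓ` we have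
`w ^ (2ℓ) = (-b)ˡ (1 - i√b t)⁻²ˡ`, and real parts of powers are Chebyshev polynomials:
`Re (zⁿ) = ‖z‖ⁿ Tₙ (Re z / ‖z‖)`, because `z² = 2 Re z · z - ‖z‖²` mirrors the recurrence of `Tₙ`.
-/

open Complex Polynomial Real

theorem Complex.re_pow_eq_norm_pow_mul_eval_chebyshevT (z : ℂ) (n : ℕ) :
    (z ^ n).re = ‖z‖ ^ n * (Chebyshev.T ℝ n).eval (z.re / ‖z‖) := by
  -- at `z = 0` this holds because `0 / 0 = 0`
  have hre : z.re / ‖z‖ * ‖z‖ = z.re := by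
    rcases eq_or_ne z 0 with rfl | hz
    · simp
    · exact div_mul_cancel₀ _ (norm_ne_zero_iff.mpr hz)
  have hsq : z ^ 2 = 2 * z.re * z - ((‖z‖ ^ 2 : ℝ) : ℂ) := by
    rw [← normSq_eq_norm_sq, ← mul_conj, re_eq_add_conj]
    ring
  induction n using Nat.twoStepInduction with
  | zero => simp
  | one => simpa [mul_comm] using hre.symm
  | more n ih₀ ih₁ =>
    have hpow : z ^ (n + 2) = 2 * z.re * z ^ (n + 1) - ((‖z‖ ^ 2 : ℝ) : ℂ) * z ^ n := by
      rw [pow_add, hsq]; ring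
    rw [hpow, sub_re, ← ofReal_ofNat, ← ofReal_mul, re_ofReal_mul, re_ofReal_mul, ih₀, ih₁]
    push_cast
    rw [Chebyshev.T_add_two]
    simp only [eval_sub, eval_mul, eval_ofNat, eval_X]
    linear_combination (-2 * ‖z‖ ^ (n + 1) * (Chebyshev.T ℝ (n + 1)).eval (z.re / ‖z‖)) * hre

theorem hasDerivAt_div_one_sub_mul (c : ℂ) {t : ℝ} (ht : 1 - c * t ≠ 0) :
    HasDerivAt (fun s : ℝ => c / (1 - c * s)) ((c / (1 - c * t)) ^ 2) t := by
  have hden : HasDerivAt (fun s : ℝ => 1 - c * s) (-c) t := by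
    simpa using ((ofRealCLM.hasDerivAt (x := t)).const_mul c).const_sub 1
  refine ((hasDerivAt_const t c).fun_div hden ht).congr_deriv ?_
  field_simp
  ring

theorem hasDerivAt_re_div_one_sub_mul_pow (c : ℂ) {t : ℝ} (ht : 1 - c * t ≠ 0) (n : ℕ) :
    HasDerivAt (fun s : ℝ => ((c / (1 - c * s)) ^ n).re)
      (n * ((c / (1 - c * t)) ^ (n + 1)).re) t := by
  refine (reCLM.hasFDerivAt.comp_hasDerivAt t
    ((hasDerivAt_div_one_sub_mul c ht).fun_pow n)).congr_deriv ?_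
  rw [reCLM_apply, ← re_ofReal_mul]
  rcases n with _ | n
  · simp
  · push_cast; ring_nf

theorem one_sub_ofReal_mul_I_mul_ne_zero (a t : ℝ) : 1 - (a * I : ℂ) * t ≠ 0 := by
  intro h
  simpa using congrArg re h

theorem re_sqrt_mul_I_div_one_sub {b : ℝ} (hb : 0 ≤ b) (t : ℝ) :
    ((√b * I) / (1 - √b * I * t)).re = -(b * t) / (1 + b * t ^ 2) := by
  simp [div_re, normSq_apply]
  ring_nf
  rw [sq_sqrt hb]
  ring

theorem iteratedDeriv_succ_log_one_add_mul_sq {b : ℝ} (hb : 0 ≤ b) (n : ℕ) (t : ℝ) :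
    iteratedDeriv (n + 1) (fun s => Real.log (1 + b * s ^ 2)) t
      = -2 * n.factorial * (((√b * I) / (1 - √b * I * t)) ^ (n + 1)).re := by
  induction n generalizing t with
  | zero =>
    have hpos : 0 < 1 + b * t ^ 2 := by positivity
    have hderiv := (((hasDerivAt_pow 2 t).const_mul b).const_add 1).log hpos.ne'
    rw [iteratedDeriv_one, hderiv.deriv]
    simp only [zero_add, pow_one, Nat.factorial_zero, re_sqrt_mul_I_div_one_sub hb]
    push_cast
    ring
  | succ n ih =>
    rw [iteratedDeriv_succ, funext ih]
    have hne := one_sub_ofReal_mul_I_mul_ne_zero √b t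
    rw [((hasDerivAt_re_div_one_sub_mul_pow _ hne (n + 1)).const_mul (-2 * n.factorial : ℝ)).deriv]
    push_cast [Nat.factorial_succ]
    ring

theorem re_sqrt_mul_I_div_one_sub_pow_two_mul {b : ℝ} (hb : 0 ≤ b) (ℓ : ℕ) (t : ℝ) :
    (((√b * I) / (1 - √b * I * t)) ^ (2 * ℓ)).re
      = (-b) ^ ℓ / (1 + b * t ^ 2) ^ ℓ * (Chebyshev.T ℝ (2 * ℓ)).eval (1 / √(1 + b * t ^ 2)) := by
  set z : ℂ := 1 - √b * I * t
  set r := 1 + b * t ^ 2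
  have hr : 0 < r := by positivity
  have hs : √r ^ 2 = r := sq_sqrt hr.le
  have hnorm : ‖z‖ = √r := by
    rw [norm_def]
    congr 1
    simp [normSq_apply, z, r]
    linear_combination t ^ 2 * mul_self_sqrt hb
  have hsq : (√b * I : ℂ) ^ 2 = ((-b : ℝ) : ℂ) := by
    rw [mul_pow, ← ofReal_pow, sq_sqrt hb, I_sq]
    push_cast; ring
  have harg : 1 / r / (√r)⁻¹ = 1 / √r := by
    have : 0 < √r := sqrt_pos.mpr hr
    field_simp
    exact hs
  rw [div_eq_mul_inv, mul_pow, pow_mul, hsq, ← ofReal_pow, re_ofReal_mul,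
    re_pow_eq_norm_pow_mul_eval_chebyshevT, norm_inv, inv_re, normSq_eq_norm_sq, hnorm, hs,
    show z.re = 1 by simp [z], harg, pow_mul, inv_pow, hs]
  push_cast
  ring

/-- For `b > 0` and `ℓ ≥ 1`, the `2ℓ`-th derivative of `u ↦ log(1+bu²)` equals
`2(-1)^{ℓ-1} b^ℓ (2ℓ-1)!/(1+bu²)^ℓ · T_{2ℓ}(1/√(1+bu²))`, with `T_n` the Chebyshev
polynomial of the first kind. -/
theorem iteratedDeriv_log_one_add_sq_even (b : ℝ) (hb : 0 < b) (ℓ : ℕ) (hℓ : 1 ≤ ℓ)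
    (u : ℝ) :
    iteratedDeriv (2 * ℓ) (fun t => Real.log (1 + b * t ^ 2)) u
      = 2 * (-1 : ℝ) ^ (ℓ - 1) * b ^ ℓ * (Nat.factorial (2 * ℓ - 1)) / (1 + b * u ^ 2) ^ ℓ *
          (Polynomial.Chebyshev.T ℝ (2 * ℓ)).eval (1 / Real.sqrt (1 + b * u ^ 2)) := by
  obtain ⟨k, rfl⟩ : ∃ k, ℓ = k + 1 := ⟨ℓ - 1, by omega⟩
  have hodd : 2 * (k + 1) = (2 * k + 1) + 1 := by ring
  rw [hodd, iteratedDeriv_succ_log_one_add_mul_sq hb.le, ← hodd,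
    re_sqrt_mul_I_div_one_sub_pow_two_mul hb.le, hodd, Nat.add_sub_cancel, neg_pow b, pow_succ]
  push_cast
  ring
end

section
/- For b > 0 and ℓ ≥ 0, the (2ℓ+1)-th derivative of u ↦ log(1 + bu²) equals 2(-1)^ℓ b^{ℓ+1} (2ℓ)! u / (1+bu²)^{ℓ+1} · U_{2ℓ}(1/√(1+bu²)), where U_n is the Chebyshev polynomial of the second kind. -/
/-!
With `b = s²`, the first derivative is `2bu/(1+bu²) = 2s · Re (su + i)⁻¹`, and the derivatives of
`(su + i)⁻¹` are explicit: `dⁿ/duⁿ (su + i)⁻¹ = (-1)ⁿ n! sⁿ (su + i)^{-(n+1)}`. Writing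
`x + i = √(1+x²) · i e^{-iθ}` with `θ = arctan x` turns `Re (x + i)^{-(2ℓ+1)}` into
`(-1)^ℓ sin((2ℓ+1)θ) / √(1+x²)^{2ℓ+1}`, and `sin((2ℓ+1)θ) = sin θ · U_{2ℓ}(cos θ)` where
`cos θ = 1/√(1+x²)` and `sin θ = x/√(1+x²)`.
-/

open Complex Polynomial Chebyshev

lemma ofReal_add_I_inv (x : ℝ) :
    ((x : ℂ) + I)⁻¹
      = -I * (cos (Real.arctan x) + sin (Real.arctan x) * I) / √(1 + x ^ 2) := by
  have hR : (√(1 + x ^ 2) : ℂ) ≠ 0 := by norm_cast; positivity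
  have hR2 : (√(1 + x ^ 2) : ℂ) ^ 2 = 1 + x ^ 2 := by
    rw [← ofReal_pow, Real.sq_sqrt (by positivity)]; push_cast; ring
  rw [← ofReal_cos, ← ofReal_sin, Real.cos_arctan, Real.sin_arctan]
  refine inv_eq_of_mul_eq_one_right ?_
  push_cast
  field_simp
  linear_combination -hR2 - (x ^ 2 + 1 + x * I) * I_sq

lemma re_ofReal_add_I_zpow_neg_odd_eq_sin (x : ℝ) (ℓ : ℕ) :
    (((x : ℂ) + I) ^ (-(2 * ℓ + 1 : ℤ))).re
      = (-1) ^ ℓ * Real.sin ((2 * ℓ + 1) * Real.arctan x) / √(1 + x ^ 2) ^ (2 * ℓ + 1) := by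
  set φ := (2 * ℓ + 1) * Real.arctan x
  set R := √(1 + x ^ 2)
  have hI : (-I) ^ (2 * ℓ + 1) = (-1) ^ ℓ * -I := by
    rw [pow_succ, pow_mul, neg_sq, I_sq]
  have hpow : ((x : ℂ) + I) ^ (-(2 * ℓ + 1 : ℤ))
      = (((-1) ^ ℓ * Real.sin φ / R ^ (2 * ℓ + 1) : ℝ) : ℂ)
        + ((-(-1) ^ ℓ * Real.cos φ / R ^ (2 * ℓ + 1) : ℝ) : ℂ) * I := by
    rw [show (-(2 * ℓ + 1 : ℤ)) = -((2 * ℓ + 1 : ℕ) : ℤ) by push_cast; ring, zpow_neg,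
      zpow_natCast, ← inv_pow, ofReal_add_I_inv, div_pow, mul_pow, cos_add_sin_mul_I_pow, hI,
      show ((2 * ℓ + 1 : ℕ) : ℂ) * Real.arctan x = φ by push_cast [φ]; ring]
    simp only [ofReal_mul, ofReal_div, ofReal_neg, ofReal_pow, ofReal_one, ofReal_cos,
      ofReal_sin]
    linear_combination (-(-1) ^ ℓ * sin (φ : ℂ) / (R : ℂ) ^ (2 * ℓ + 1)) * I_sq
  rw [hpow, add_re, ofReal_re, re_ofReal_mul, I_re, mul_zero, add_zero]

lemma sin_mul_arctan_eq_U_eval (n : ℤ) (x : ℝ) :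
    Real.sin ((n + 1) * Real.arctan x)
      = x / √(1 + x ^ 2) * (U ℝ n).eval (1 / √(1 + x ^ 2)) := by
  rw [← U_real_cos, Real.cos_arctan, Real.sin_arctan, mul_comm]

lemma re_ofReal_add_I_zpow_neg_odd (x : ℝ) (ℓ : ℕ) :
    (((x : ℂ) + I) ^ (-(2 * ℓ + 1 : ℤ))).re
      = (-1) ^ ℓ * x / (1 + x ^ 2) ^ (ℓ + 1) * (U ℝ (2 * ℓ)).eval (1 / √(1 + x ^ 2)) := by
  have hR2 : (1 + x ^ 2) ^ (ℓ + 1) = √(1 + x ^ 2) ^ (2 * ℓ + 2) := by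
    rw [show 2 * ℓ + 2 = 2 * (ℓ + 1) by ring, pow_mul, Real.sq_sqrt (by positivity)]
  rw [re_ofReal_add_I_zpow_neg_odd_eq_sin,
    show (2 * ℓ + 1 : ℝ) = ((2 * ℓ : ℤ) : ℝ) + 1 by push_cast; ring, sin_mul_arctan_eq_U_eval, hR2]
  field_simp
  ring

lemma hasDerivAt_re_mul_add_I_zpow (s : ℝ) (m : ℤ) (t : ℝ) :
    HasDerivAt (fun t : ℝ => (((s : ℂ) * t + I) ^ m).re)
      ((m * ((s : ℂ) * t + I) ^ (m - 1) * s).re) t := by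
  have hne : (s : ℂ) * t + I ≠ 0 := by
    intro h; simpa using congrArg im h
  have hlin : HasDerivAt (fun z : ℂ => (s : ℂ) * z + I) s t := by
    simpa using ((hasDerivAt_id (t : ℂ)).const_mul (s : ℂ)).add_const I
  refine HasDerivAt.real_of_complex (e := fun z => ((s : ℂ) * z + I) ^ m) ?_
  exact (hasDerivAt_zpow m _ (Or.inl hne)).comp (t : ℂ) hlin

lemma iteratedDeriv_re_mul_add_I_inv (s : ℝ) (n : ℕ) :
    iteratedDeriv n (fun t : ℝ => (((s : ℂ) * t + I) ^ (-1 : ℤ)).re)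
      = fun t : ℝ =>
          (-1) ^ n * n.factorial * s ^ n * (((s : ℂ) * t + I) ^ (-(n + 1 : ℤ))).re := by
  induction n with
  | zero => simp
  | succ n ih =>
    ext t
    have h := (hasDerivAt_re_mul_add_I_zpow s (-(n + 1)) t).const_mul
      ((-1) ^ n * n.factorial * s ^ n)
    rw [iteratedDeriv_succ, ih, h.deriv,
      show (-(n + 1 : ℤ) - 1) = -(↑(n + 1) + 1) by push_cast; ring]
    simp only [re_mul_ofReal, ← ofReal_intCast, re_ofReal_mul, Nat.factorial_succ]
    push_cast
    ring

lemma deriv_log_one_add_sq_mul_sq (s : ℝ) :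
    deriv (fun t => Real.log (1 + s ^ 2 * t ^ 2))
      = fun t : ℝ => 2 * s * (((s : ℂ) * t + I) ^ (-1 : ℤ)).re := by
  ext t
  have hpos : 0 < 1 + s ^ 2 * t ^ 2 := by positivity
  have h : HasDerivAt (fun t => 1 + s ^ 2 * t ^ 2) (s ^ 2 * (2 * t)) t := by
    simpa using ((hasDerivAt_pow 2 t).const_mul (s ^ 2)).const_add 1
  rw [(h.log hpos.ne').deriv, zpow_neg_one, inv_re, normSq_apply]
  simp only [add_re, add_im, re_ofReal_mul, im_ofReal_mul, ofReal_re, ofReal_im, I_re, I_im,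
    mul_zero, add_zero, zero_add, mul_one]
  ring

/-- For `b > 0` and `ℓ ≥ 0`, the `(2ℓ+1)`-th derivative of `u ↦ log(1+bu²)` equals
`2(-1)^ℓ b^{ℓ+1} (2ℓ)! u/(1+bu²)^{ℓ+1} · U_{2ℓ}(1/√(1+bu²))`, with `U_n` the Chebyshev
polynomial of the second kind. -/
theorem iteratedDeriv_log_one_add_sq_odd (b : ℝ) (hb : 0 < b) (ℓ : ℕ) (u : ℝ) :
    iteratedDeriv (2 * ℓ + 1) (fun t => Real.log (1 + b * t ^ 2)) u
      = 2 * (-1 : ℝ) ^ ℓ * b ^ (ℓ + 1) * (Nat.factorial (2 * ℓ)) * u /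
            (1 + b * u ^ 2) ^ (ℓ + 1) *
          (Polynomial.Chebyshev.U ℝ (2 * ℓ)).eval (1 / Real.sqrt (1 + b * u ^ 2)) := by
  obtain ⟨s, rfl⟩ : ∃ s, b = s ^ 2 := ⟨√b, (Real.sq_sqrt hb.le).symm⟩
  rw [iteratedDeriv_succ', deriv_log_one_add_sq_mul_sq, iteratedDeriv_const_mul_field,
    iteratedDeriv_re_mul_add_I_inv]
  dsimp only
  rw [← ofReal_mul, show (-(↑(2 * ℓ) + 1) : ℤ) = -(2 * ℓ + 1) by push_cast; ring,
    re_ofReal_add_I_zpow_neg_odd, mul_pow, (even_two_mul ℓ).neg_one_pow]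
  ring
end
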